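/- Let Ω̃ and Ω be open subsets of ℂ, let φ : Ω̃ → Ω be a holomorphic bijection with nonvanishing derivative, and let h(z) = |φ'(φ⁻¹(z))|⁻² be the conformal weight on Ω. Let α > 1 and assume ∫_{Ω̃} |φ'(w)|^{2α} dA(w) < ∞. Then for every measurable function f : Ω → ℝ and every r with α/(α-1) ≤ r < ∞, setting s = r(α-1)/α, one has (∫_{Ω} |f(z)|^s dA(z))^{1/s} ≤ (∫_{Ω̃} |φ'(w)|^{2α} dA(w))^{1/(αs)} · (∫_{Ω} |f(z)|^r h(z) dA(z))^{1/r} (an inequality in [0,∞]). -/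

import Mathlib

open MeasureTheory Real Set
open scoped ENNReal

/-!
Substituting `z = φ w` gives `dA(z) = |φ'(w)|² dA(w)`, and the conformal weight cancels this
Jacobian, so the right-hand integral becomes `∫_{Ω'} |f ∘ φ|^r` while the left one becomes
`∫_{Ω'} |f ∘ φ|^s |φ'|²`. Hölder's inequality with the conjugate exponents `α / (α - 1)` and `α`
then bounds the latter, since `s · α / (α - 1) = r`.
-/

theorem Complex.det_restrictScalars_toSpanSingleton (c : ℂ) :
    ((ContinuousLinearMap.toSpanSingleton ℂ c).restrictScalars ℝ).det = Complex.normSq c := by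
  simp [ContinuousLinearMap.det, LinearMap.det_restrictScalars, Algebra.norm_complex_eq]

theorem lintegral_image_eq_lintegral_enorm_deriv_sq_mul {s : Set ℂ} {f f' : ℂ → ℂ}
    (hs : MeasurableSet s) (hf' : ∀ x ∈ s, HasDerivWithinAt f (f' x) s x) (hf : InjOn f s)
    (g : ℂ → ℝ≥0∞) :
    ∫⁻ x in f '' s, g x = ∫⁻ x in s, ‖f' x‖ₑ ^ 2 * g (f x) := by
  rw [lintegral_image_eq_lintegral_abs_det_fderiv_mul volume hs
    (fun x hx => (hf' x hx).hasFDerivWithinAt.restrictScalars ℝ) hf g]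
  congr! 3 with x
  rw [Complex.det_restrictScalars_toSpanSingleton, Complex.normSq_eq_norm_sq,
    abs_of_nonneg (by positivity), ENNReal.ofReal_pow (norm_nonneg _), ofReal_norm]

theorem lintegral_rpow_mul_le_holder {X : Type*} [MeasurableSpace X] (μ : Measure X)
    {F J : X → ℝ≥0∞} (hF : AEMeasurable F μ) (hJ : AEMeasurable J μ)
    {α r s : ℝ} (hα : 1 < α) (hr : 0 < r) (hs : s = r * (α - 1) / α) :
    (∫⁻ x, F x ^ s * J x ∂μ) ^ (1 / s)
      ≤ (∫⁻ x, J x ^ α ∂μ) ^ (1 / (α * s)) * (∫⁻ x, F x ^ r ∂μ) ^ (1 / r) := by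
  have hα1 : 0 < α - 1 := sub_pos.2 hα
  have hs0 : 0 < s := by rw [hs]; positivity
  have hpq : (α / (α - 1)).HolderConjugate α := by
    simpa [Real.conjExponent] using (Real.HolderConjugate.conjExponent hα).symm
  have hsp : s * (α / (α - 1)) = r := by rw [hs]; field_simp
  have holder := ENNReal.lintegral_mul_le_Lp_mul_Lq μ hpq (hF.pow_const s) hJ
  simp only [Pi.mul_apply, ← ENNReal.rpow_mul, hsp] at holder
  calc (∫⁻ x, F x ^ s * J x ∂μ) ^ (1 / s)
      ≤ ((∫⁻ x, F x ^ r ∂μ) ^ (1 / (α / (α - 1))) * (∫⁻ x, J x ^ α ∂μ) ^ (1 / α)) ^ (1 / s) :=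
        ENNReal.rpow_le_rpow holder (by positivity)
    _ = (∫⁻ x, J x ^ α ∂μ) ^ (1 / (α * s)) * (∫⁻ x, F x ^ r ∂μ) ^ (1 / r) := by
        rw [ENNReal.mul_rpow_of_nonneg _ _ (by positivity), ← ENNReal.rpow_mul,
          ← ENNReal.rpow_mul, mul_comm]
        congr 2
        · field_simp
        · rw [← hsp]
          field_simp

theorem weighted_lebesgue_embedding_general
    (Ω' Ω : Set ℂ) (hΩ'o : IsOpen Ω')
    (φ ψ : ℂ → ℂ) (φ' : ℂ → ℂ)
    (hholo : ∀ w ∈ Ω', HasDerivAt φ (φ' w) w)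
    (hφ'ne : ∀ w ∈ Ω', φ' w ≠ 0)
    (hbij : Set.BijOn φ Ω' Ω)
    (hinv : Set.InvOn ψ φ Ω' Ω)
    (h : ℂ → ℝ≥0∞)
    (hh : ∀ z ∈ Ω, h z = ((‖φ' (ψ z)‖₊ : ℝ≥0∞) ^ (2 : ℝ))⁻¹)
    (α : ℝ) (hα : 1 < α)
    (f : ℂ → ℝ) (hf : Measurable f)
    (r s : ℝ) (hr : α / (α - 1) ≤ r) (hs : s = r * (α - 1) / α) :
    (∫⁻ z in Ω, (‖f z‖₊ : ℝ≥0∞) ^ s) ^ (1 / s)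
      ≤ (∫⁻ w in Ω', (‖φ' w‖₊ : ℝ≥0∞) ^ (2 * α)) ^ (1 / (α * s))
        * (∫⁻ z in Ω, (‖f z‖₊ : ℝ≥0∞) ^ r * h z) ^ (1 / r) := by
  simp only [← enorm_eq_nnnorm, ENNReal.rpow_two] at hh ⊢
  have hΩ' := hΩ'o.measurableSet
  have hchange (g : ℂ → ℝ≥0∞) : ∫⁻ z in Ω, g z = ∫⁻ w in Ω', ‖φ' w‖ₑ ^ 2 * g (φ w) := by
    rw [← hbij.image_eq, lintegral_image_eq_lintegral_enorm_deriv_sq_mul hΩ'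
      (fun w hw => (hholo w hw).hasDerivWithinAt) hbij.injOn]
  have hweight : ∀ w ∈ Ω', ‖φ' w‖ₑ ^ 2 * h (φ w) = 1 := fun w hw => by
    rw [hh _ (hbij.mapsTo hw), hinv.1 hw]
    exact ENNReal.mul_inv_cancel (by simpa using hφ'ne w hw) (by simp)
  have hfφ : AEMeasurable (fun w => ‖f (φ w)‖ₑ) (volume.restrict Ω') :=
    (hf.comp_aemeasurable (ContinuousOn.aemeasurable
      (fun w hw => (hholo w hw).continuousAt.continuousWithinAt) hΩ')).enorm
  have hJ : AEMeasurable (fun w => ‖φ' w‖ₑ ^ 2) (volume.restrict Ω') :=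
    ((measurable_deriv φ).aemeasurable.congr ((ae_restrict_mem hΩ').mono
      fun w hw => (hholo w hw).deriv)).enorm.pow_const 2
  have hleft : ∫⁻ z in Ω, ‖f z‖ₑ ^ s = ∫⁻ w in Ω', ‖f (φ w)‖ₑ ^ s * ‖φ' w‖ₑ ^ 2 := by
    rw [hchange]
    simp only [mul_comm]
  have hright : ∫⁻ z in Ω, ‖f z‖ₑ ^ r * h z = ∫⁻ w in Ω', ‖f (φ w)‖ₑ ^ r := by
    rw [hchange]
    refine setLIntegral_congr_fun hΩ' fun w hw => ?_
    rw [mul_left_comm, hweight w hw, mul_one]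
  have hJα (w : ℂ) : (‖φ' w‖ₑ ^ 2) ^ α = ‖φ' w‖ₑ ^ (2 * α) := by
    rw [ENNReal.rpow_mul, ENNReal.rpow_two]
  rw [hleft, hright]
  simpa only [hJα] using lintegral_rpow_mul_le_holder _ hfφ hJ hα
    ((div_pos (by linarith) (by linarith)).trans_le hr) hs

theorem weighted_lebesgue_embedding
    (Ω' Ω : Set ℂ) (hΩ'o : IsOpen Ω') (hΩo : IsOpen Ω)
    (φ ψ : ℂ → ℂ) (φ' : ℂ → ℂ)
    (hholo : ∀ w ∈ Ω', HasDerivAt φ (φ' w) w)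
    (hφ'ne : ∀ w ∈ Ω', φ' w ≠ 0)
    (hbij : Set.BijOn φ Ω' Ω)
    (hinv : Set.InvOn ψ φ Ω' Ω)
    (h : ℂ → ℝ≥0∞)
    (hh : ∀ z ∈ Ω, h z = ((‖φ' (ψ z)‖₊ : ℝ≥0∞) ^ (2 : ℝ))⁻¹)
    (α : ℝ) (hα : 1 < α)
    (hreg : ∫⁻ w in Ω', (‖φ' w‖₊ : ℝ≥0∞) ^ (2 * α) < ⊤)
    (f : ℂ → ℝ) (hf : Measurable f)
    (r s : ℝ) (hr : α / (α - 1) ≤ r) (hs : s = r * (α - 1) / α) :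
    (∫⁻ z in Ω, (‖f z‖₊ : ℝ≥0∞) ^ s) ^ (1 / s)
      ≤ (∫⁻ w in Ω', (‖φ' w‖₊ : ℝ≥0∞) ^ (2 * α)) ^ (1 / (α * s))
        * (∫⁻ z in Ω, (‖f z‖₊ : ℝ≥0∞) ^ r * h z) ^ (1 / r) :=
  weighted_lebesgue_embedding_general Ω' Ω hΩ'o φ ψ φ' hholo hφ'ne hbij hinv h hh α hα f hf r s hr
    hs
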